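/- Any 2^m consecutive points of the base-2 van der Corput sequence form a (0,m,1)-net in base 2: for every a ∈ ℕ, every m ∈ ℕ, and every integer c with 0 ≤ c < 2^m, there is exactly one index i with 0 ≤ i < 2^m such that φ_2(a+i) ∈ [c/2^m, (c+1)/2^m). -/

import Mathlib

/-! Let `bitRev m n` be the `m`-digit number whose binary digits are the lowest `m` digits of `n`
in reverse order. The recursion `φ₂(n) = (n mod 2 + φ₂(⌊n/2⌋)) / 2` unrolls to
`2^m φ₂(n) = bitRev m n + φ₂(⌊n/2^m⌋)`, and since `0 ≤ φ₂ < 1`, the point `φ₂(n)` lies in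
`[c/2^m, (c+1)/2^m)` exactly when `bitRev m n = c`. As `bitRev m x = bitRev m y` iff
`x ≡ y (mod 2^m)`, the map `i ↦ bitRev m (a+i)` is injective on `[0, 2^m)`, hence a bijection
of `[0, 2^m)`. -/

/-- The base-2 radical inverse (van der Corput) function: `n = ∑_j a_j 2^j` with binary
digits `a_j ∈ {0,1}` is mapped to `∑_j a_j 2^{−j−1}`.  (Digits `a_j` with `j ≥ n`
vanish, so summing over `j < n` suffices.) -/
noncomputable def radInv2 (n : ℕ) : ℝ :=
  ∑ j ∈ Finset.range n, if n.testBit j then ((2 : ℝ) ^ (j + 1))⁻¹ else 0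

def bitRev : ℕ → ℕ → ℕ
  | 0, _ => 0
  | m + 1, n => n % 2 * 2 ^ m + bitRev m (n / 2)

lemma bitRev_lt (m n : ℕ) : bitRev m n < 2 ^ m := by
  induction m generalizing n with
  | zero => simp [bitRev]
  | succ m ih =>
    have := ih (n / 2)
    rw [bitRev, pow_succ]
    rcases Nat.mod_two_eq_zero_or_one n with h | h <;>
      simp only [h, zero_mul, one_mul] <;> omega

lemma bitRev_eq_bitRev_iff (m x y : ℕ) : bitRev m x = bitRev m y ↔ x ≡ y [MOD 2 ^ m] := by
  induction m generalizing x y with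
  | zero => simp [bitRev, Nat.modEq_one]
  | succ m ih =>
    have hx := bitRev_lt m (x / 2)
    have hy := bitRev_lt m (y / 2)
    have hsplit : bitRev (m + 1) x = bitRev (m + 1) y ↔
        x % 2 = y % 2 ∧ bitRev m (x / 2) = bitRev m (y / 2) := by
      simp only [bitRev]
      rcases Nat.mod_two_eq_zero_or_one x with h | h <;>
        rcases Nat.mod_two_eq_zero_or_one y with h' | h' <;>
        simp only [h, h', zero_mul, one_mul, true_and] <;> omega
    rw [hsplit, ih, pow_succ', Nat.ModEq, Nat.ModEq, Nat.mod_mul, Nat.mod_mul]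
    omega

lemma radInv2_nonneg (n : ℕ) : 0 ≤ radInv2 n :=
  Finset.sum_nonneg fun j _ => by split_ifs <;> positivity

lemma radInv2_eq_sum_of_le {n N : ℕ} (h : n ≤ N) :
    radInv2 n = ∑ j ∈ Finset.range N, if n.testBit j then ((2 : ℝ) ^ (j + 1))⁻¹ else 0 := by
  refine Finset.sum_subset (Finset.range_subset_range.2 h) fun j _ hj => ?_
  have hnj : n < 2 ^ j := Nat.lt_two_pow_self.trans_le
    (Nat.pow_le_pow_right two_pos (not_lt.1 (Finset.mem_range.not.1 hj)))
  simp [Nat.testBit_lt_two_pow hnj]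

lemma radInv2_eq_mod_two_add (n : ℕ) : radInv2 n = ((n % 2 : ℕ) + radInv2 (n / 2)) / 2 := by
  rw [radInv2_eq_sum_of_le (Nat.le_succ n), radInv2_eq_sum_of_le (Nat.div_le_self n 2),
    Finset.sum_range_succ', add_div, Finset.sum_div, add_comm (_ / 2)]
  congr 1
  · refine Finset.sum_congr rfl fun j _ => ?_
    rw [Nat.testBit_succ]
    split_ifs <;> ring
  · rcases Nat.mod_two_eq_zero_or_one n with h | h <;> simp [Nat.testBit_zero, h]

lemma radInv2_lt_one (n : ℕ) : radInv2 n < 1 := by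
  induction n using Nat.strong_induction_on with
  | _ n ih =>
    rcases Nat.eq_zero_or_pos n with rfl | hn
    · simp [radInv2]
    have hbit : ((n % 2 : ℕ) : ℝ) ≤ 1 := by
      exact_mod_cast Nat.le_of_lt_succ (n.mod_lt two_pos)
    have := ih (n / 2) (Nat.div_lt_self hn one_lt_two)
    rw [radInv2_eq_mod_two_add]
    linarith

lemma two_pow_mul_radInv2 (m n : ℕ) :
    2 ^ m * radInv2 n = bitRev m n + radInv2 (n / 2 ^ m) := by
  induction m generalizing n with
  | zero => simp [bitRev]
  | succ m ih =>
    have hrec := radInv2_eq_mod_two_add n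
    rw [pow_succ, mul_assoc, show 2 * radInv2 n = (n % 2 : ℕ) + radInv2 (n / 2) by linarith,
      mul_add, ih, Nat.div_div_eq_div_mul, ← pow_succ', bitRev]
    push_cast
    ring

lemma radInv2_mem_Ico_iff (m n c : ℕ) :
    radInv2 n ∈ Set.Ico ((c : ℝ) / 2 ^ m) (((c : ℝ) + 1) / 2 ^ m) ↔ bitRev m n = c := by
  have hpos : (0 : ℝ) < 2 ^ m := by positivity
  have hnonneg : 0 ≤ 2 ^ m * radInv2 n := mul_nonneg hpos.le (radInv2_nonneg n)
  have hfloor : ⌊2 ^ m * radInv2 n⌋₊ = bitRev m n := by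
    rw [Nat.floor_eq_iff hnonneg, two_pow_mul_radInv2]
    exact ⟨by linarith [radInv2_nonneg (n / 2 ^ m)], by linarith [radInv2_lt_one (n / 2 ^ m)]⟩
  rw [Set.mem_Ico, div_le_iff₀' hpos, lt_div_iff₀' hpos, ← Nat.floor_eq_iff hnonneg, hfloor]

lemma bijOn_bitRev_add (a m : ℕ) :
    Set.BijOn (fun i => bitRev m (a + i)) (Set.Iio (2 ^ m)) (Set.Iio (2 ^ m)) := by
  refine ((Set.finite_Iio _).injOn_iff_bijOn_of_mapsTo fun i _ => bitRev_lt m (a + i)).1 ?_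
  intro i hi j hj hij
  exact (((bitRev_eq_bitRev_iff m _ _).1 hij).add_left_cancel' a).eq_of_lt_of_lt hi hj

/-- Any `2^m` consecutive points of the base-2 van der Corput sequence form a
`(0,m,1)`-net in base 2: for every `a ∈ ℕ`, `m ∈ ℕ` and integer `0 ≤ c < 2^m`, there is
exactly one index `0 ≤ i < 2^m` with `φ₂(a+i) ∈ [c/2^m, (c+1)/2^m)`. -/
theorem vanDerCorput_consecutive_net (a m c : ℕ) (hc : c < 2 ^ m) :
    ∃! i : ℕ, i < 2 ^ m ∧
      radInv2 (a + i) ∈ Set.Ico ((c : ℝ) / 2 ^ m) (((c : ℝ) + 1) / 2 ^ m) := by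
  have hbij := bijOn_bitRev_add a m
  obtain ⟨i, hi, hic⟩ := hbij.surjOn (Set.mem_Iio.2 hc)
  refine ⟨i, ⟨hi, (radInv2_mem_Ico_iff m _ c).2 hic⟩, fun j ⟨hj, hjc⟩ => hbij.injOn hj hi ?_⟩
  exact ((radInv2_mem_Ico_iff m _ c).1 hjc).trans hic.symm
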